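/- arXiv:2103.04277 — 4 statements merged into one kernel-verified Lean document; each statement's English description precedes it below -/
import Mathlib

section
/- Let I ⊆ ℝ be the closed interval with endpoints η₀ and η₁, let μ : ℝ → ℝ be twice continuously differentiable on I with μ′ > 0 on I and |μ″| ≤ M on I, and let e ∈ [0,1]. Define a := e·μ′(η₁) / (e·μ′(η₁) + (1−e)·μ′(η₀)) and ν := a·η₁ + (1−a)·η₀. Then |e·μ(η₁) + (1−e)·μ(η₀) − μ(ν)| ≤ (M/2)·(η₁ − η₀)². (This is the paper's Claim 1: the marginal conditional mean e·μ(η₁)+(1−e)·μ(η₀) equals μ(ν) up to a remainder of order τ² = (η₁−η₀)².) -/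
/-! Expand `μ` to first order about `η₁` and about `η₀` and evaluate both expansions at `ν`.
With weights `e` and `1 - e` the first-order terms cancel, since
`e μ'(η₁) (ν - η₁) + (1 - e) μ'(η₀) (ν - η₀) = 0` is exactly the defining equation of `a`.
So the defect is a convex combination of two Taylor remainders, each at most
`M/2 (ν - ηᵢ)² ≤ M/2 (η₁ - η₀)²` because `ν` lies in `I`. -/

open Set Topology

section Taylor

variable {s : Set ℝ} {f f' f'' : ℝ → ℝ} {L M x y : ℝ}

theorem abs_sub_sub_mul_le_of_le_of_abs_deriv_sub_le (hs : Convex ℝ s)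
    (hf : ∀ t ∈ s, HasDerivWithinAt f (f' t) s t) (hL : ∀ t ∈ s, |f' t - f' x| ≤ L * |t - x|)
    (hx : x ∈ s) (hy : y ∈ s) (hxy : x ≤ y) :
    |f y - f x - f' x * (y - x)| ≤ L / 2 * (y - x) ^ 2 := by
  have hsub : Icc x y ⊆ s := hs.ordConnected.out hx hy
  have hcont : ContinuousOn (fun t => f t - f x - f' x * (t - x)) (Icc x y) :=
    fun t ht => ((hf t (hsub ht)).continuousWithinAt.mono hsub).sub continuousWithinAt_const
      |>.sub (continuousWithinAt_const.mul (continuousWithinAt_id.sub continuousWithinAt_const))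
  have hderiv : ∀ t ∈ Ico x y,
      HasDerivWithinAt (fun t => f t - f x - f' x * (t - x)) (f' t - f' x) (Ici t) t := by
    intro t ht
    have hst : s ∈ 𝓝[≥] t :=
      Filter.mem_of_superset (Icc_mem_nhdsGE ht.2) ((Icc_subset_Icc_left ht.1).trans hsub)
    exact (((hf t (hsub (Ico_subset_Icc_self ht))).mono_of_mem_nhdsWithin hst).sub_const (f x)
      |>.sub (((hasDerivWithinAt_id t _).sub_const x).const_mul (f' x))).congr_deriv (by ring)
  have hbound : ∀ t, HasDerivAt (fun t => L / 2 * (t - x) ^ 2) (L * (t - x)) t := fun t =>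
    ((((hasDerivAt_id t).sub_const x).pow 2).const_mul (L / 2)).congr_deriv
      (by simp only [id_eq]; ring)
  refine image_norm_le_of_norm_deriv_right_le_deriv_boundary hcont hderiv (by simp) hbound
    (fun t ht => ?_) ⟨hxy, le_rfl⟩
  simpa [abs_of_nonneg (sub_nonneg.2 ht.1)] using hL t (hsub (Ico_subset_Icc_self ht))

theorem abs_sub_sub_mul_le_of_abs_deriv_sub_le (hs : Convex ℝ s)
    (hf : ∀ t ∈ s, HasDerivWithinAt f (f' t) s t) (hL : ∀ t ∈ s, |f' t - f' x| ≤ L * |t - x|)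
    (hx : x ∈ s) (hy : y ∈ s) :
    |f y - f x - f' x * (y - x)| ≤ L / 2 * (y - x) ^ 2 := by
  rcases le_total x y with hxy | hyx
  · exact abs_sub_sub_mul_le_of_le_of_abs_deriv_sub_le hs hf hL hx hy hxy
  -- For `y ≤ x`, reflect: `t ↦ f (-t)` on `-s` expands about `-x ≤ -y`.
  have hf_neg : ∀ t ∈ -s, HasDerivWithinAt (fun t => f (-t)) (-f' (-t)) (-s) t := fun t ht =>
    ((hf (-t) ht).comp t (hasDerivWithinAt_neg t (-s)) fun _ hu => hu).congr_deriv (by ring)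
  have hL_neg : ∀ t ∈ -s, |-f' (-t) - -f' (-(-x))| ≤ L * |t - -x| := fun t ht => by
    rw [neg_neg, show -f' (-t) - -f' x = -(f' (-t) - f' x) by ring, show t - -x = -(-t - x) by ring,
      abs_neg, abs_neg]
    exact hL (-t) ht
  have := abs_sub_sub_mul_le_of_le_of_abs_deriv_sub_le hs.neg hf_neg hL_neg
    (by simpa using hx) (by simpa using hy) (neg_le_neg hyx)
  simp only [neg_neg] at this
  convert this using 2 <;> ring

theorem abs_sub_sub_mul_le_of_abs_deriv2_le (hs : Convex ℝ s)
    (hf : ∀ t ∈ s, HasDerivWithinAt f (f' t) s t) (hf' : ∀ t ∈ s, HasDerivWithinAt f' (f'' t) s t)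
    (hM : ∀ t ∈ s, |f'' t| ≤ M) (hx : x ∈ s) (hy : y ∈ s) :
    |f y - f x - f' x * (y - x)| ≤ M / 2 * (y - x) ^ 2 :=
  abs_sub_sub_mul_le_of_abs_deriv_sub_le hs hf
    (fun _ ht => hs.norm_image_sub_le_of_norm_hasDerivWithin_le hf' hM hx ht) hx hy

theorem abs_sub_sub_mul_le_of_abs_deriv2_le_uIcc {a b : ℝ}
    (hf : ∀ t ∈ uIcc a b, HasDerivWithinAt f (f' t) (uIcc a b) t)
    (hf' : ∀ t ∈ uIcc a b, HasDerivWithinAt f' (f'' t) (uIcc a b) t)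
    (hM : ∀ t ∈ uIcc a b, |f'' t| ≤ M) (hx : x ∈ uIcc a b) (hy : y ∈ uIcc a b) :
    |f y - f x - f' x * (y - x)| ≤ M / 2 * (b - a) ^ 2 := by
  have hM₀ : 0 ≤ M := (abs_nonneg _).trans (hM a left_mem_uIcc)
  have hdist : (y - x) ^ 2 ≤ (b - a) ^ 2 :=
    sq_le_sq.2 (abs_sub_le_of_uIcc_subset_uIcc (uIcc_subset_uIcc hx hy))
  exact (abs_sub_sub_mul_le_of_abs_deriv2_le (convex_uIcc a b) hf hf' hM hx hy).trans
    (by gcongr)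

end Taylor

theorem dina_claim1_conditional_mean_general
    (η₀ η₁ e M a ν : ℝ) (μ μ' μ'' : ℝ → ℝ)
    (hd1 : ∀ x ∈ uIcc η₀ η₁, HasDerivWithinAt μ (μ' x) (uIcc η₀ η₁) x)
    (hd2 : ∀ x ∈ uIcc η₀ η₁, HasDerivWithinAt μ' (μ'' x) (uIcc η₀ η₁) x)
    (hpos : ∀ x ∈ uIcc η₀ η₁, 0 < μ' x)
    (hM : ∀ x ∈ uIcc η₀ η₁, |μ'' x| ≤ M)
    (he : e ∈ Icc (0 : ℝ) 1)
    (ha : a = e * μ' η₁ / (e * μ' η₁ + (1 - e) * μ' η₀))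
    (hν : ν = a * η₁ + (1 - a) * η₀) :
    |e * μ η₁ + (1 - e) * μ η₀ - μ ν| ≤ M / 2 * (η₁ - η₀) ^ 2 := by
  have hV₁ := hpos η₁ right_mem_uIcc
  have hV₀ := hpos η₀ left_mem_uIcc
  have he₁ : 0 ≤ 1 - e := sub_nonneg.2 he.2
  have hD : 0 < e * μ' η₁ + (1 - e) * μ' η₀ := by
    simpa using convex_Ioi (0 : ℝ) hV₁ hV₀ he.1 he₁ (add_sub_cancel e 1)
  have ha₀ : 0 ≤ a := ha ▸ div_nonneg (mul_nonneg he.1 hV₁.le) hD.le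
  have ha₁ : a ≤ 1 := ha ▸ (div_le_one hD).2 (le_add_of_nonneg_right (mul_nonneg he₁ hV₀.le))
  have hν_mem : ν ∈ uIcc η₀ η₁ := by
    simpa [hν] using convex_uIcc η₀ η₁ right_mem_uIcc left_mem_uIcc ha₀ (sub_nonneg.2 ha₁)
      (add_sub_cancel a 1)
  have hcancel : e * μ' η₁ * (ν - η₁) + (1 - e) * μ' η₀ * (ν - η₀) = 0 := by
    rw [hν, ha]
    field_simp
    ring
  have hR₁ := abs_sub_sub_mul_le_of_abs_deriv2_le_uIcc hd1 hd2 hM right_mem_uIcc hν_mem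
  have hR₀ := abs_sub_sub_mul_le_of_abs_deriv2_le_uIcc hd1 hd2 hM left_mem_uIcc hν_mem
  have hsplit : e * μ η₁ + (1 - e) * μ η₀ - μ ν =
      -(e * (μ ν - μ η₁ - μ' η₁ * (ν - η₁)) + (1 - e) * (μ ν - μ η₀ - μ' η₀ * (ν - η₀))) := by
    linear_combination -hcancel
  rw [hsplit, abs_neg, abs_le]
  simpa using convex_Icc _ _ (abs_le.1 hR₁) (abs_le.1 hR₀) he.1 he₁ (add_sub_cancel e 1)

/-- **Claim 1 (paper).** With `I = uIcc η₀ η₁`, `μ` twice continuously differentiable on `I`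
with `μ' > 0` and `|μ''| ≤ M` on `I`, `e ∈ [0,1]`,
`a = e μ'(η₁) / (e μ'(η₁) + (1−e) μ'(η₀))` and `ν = a η₁ + (1−a) η₀`, one has
`|e μ(η₁) + (1−e) μ(η₀) − μ(ν)| ≤ (M/2) (η₁ − η₀)²`. -/
theorem dina_claim1_conditional_mean
    (η₀ η₁ e M a ν : ℝ) (μ μ' μ'' : ℝ → ℝ)
    (hd1 : ∀ x ∈ uIcc η₀ η₁, HasDerivWithinAt μ (μ' x) (uIcc η₀ η₁) x)
    (hd2 : ∀ x ∈ uIcc η₀ η₁, HasDerivWithinAt μ' (μ'' x) (uIcc η₀ η₁) x)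
    (hc : ContinuousOn μ'' (uIcc η₀ η₁))
    (hpos : ∀ x ∈ uIcc η₀ η₁, 0 < μ' x)
    (hM : ∀ x ∈ uIcc η₀ η₁, |μ'' x| ≤ M)
    (he : e ∈ Icc (0 : ℝ) 1)
    (ha : a = e * μ' η₁ / (e * μ' η₁ + (1 - e) * μ' η₀))
    (hν : ν = a * η₁ + (1 - a) * η₀) :
    |e * μ η₁ + (1 - e) * μ η₀ - μ ν| ≤ M / 2 * (η₁ - η₀) ^ 2 :=
  dina_claim1_conditional_mean_general η₀ η₁ e M a ν μ μ' μ'' hd1 hd2 hpos hM he ha hν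
end

section
/- Let (Ω, 𝒜, P) be a probability space, E a measurable space, X : Ω → E measurable, and W : Ω → {0,1} measurable. Let e : E → [0,1], η₀ : E → ℝ, η₁ : E → ℝ be bounded measurable functions, and let ψ : ℝ → ℝ be twice continuously differentiable with ψ″ > 0. Assume that for every bounded measurable f : E → ℝ, E[W·f(X)] = E[e(X)·f(X)] (i.e., e(X) is a version of P(W = 1 | X)). Define V_w(x) := ψ″(η_w(x)) for w ∈ {0,1}, a(x) := e(x)·V₁(x) / (e(x)·V₁(x) + (1−e(x))·V₀(x)), and η_W(ω) := η_{W(ω)}(X(ω)). Then for every bounded measurable g : E → ℝ, E[ ψ″(η_W) · (W − a(X)) · g(X) ] = 0. (This is the core of the paper's Claim A.3: the exponential-family score with the modified propensity a(x) is Neyman-orthogonal to perturbations of the baseline ν.) -/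
open MeasureTheory Set

/-!
Since `W ∈ {0, 1}`, the integrand `ψ''(η_W) (W - a(X)) g(X)` equals
`W h₁(X) - (1 - W) h₀(X)` with `h₁ = V₁ (1 - a) g` and `h₀ = V₀ a g`. Replacing `W` by its
conditional mean `e(X)` turns this into `(e h₁ - (1 - e) h₀)(X)`, and the modified propensity `a`
is exactly the weight that balances the two arms: `e V₁ (1 - a) = (1 - e) V₀ a`.
-/

section Bounded

variable {E : Type*} {f g : E → ℝ}

lemma exists_abs_le_of_mem_Icc (hf : ∀ x, f x ∈ Icc (0 : ℝ) 1) : ∃ C, ∀ x, |f x| ≤ C :=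
  ⟨1, fun x => abs_le.mpr ⟨by linarith [(hf x).1], (hf x).2⟩⟩

lemma exists_abs_mul_le (hf : ∃ C, ∀ x, |f x| ≤ C) (hg : ∃ C, ∀ x, |g x| ≤ C) :
    ∃ C, ∀ x, |f x * g x| ≤ C := by
  obtain ⟨C, hC⟩ := hf
  obtain ⟨D, hD⟩ := hg
  refine ⟨C * D, fun x => ?_⟩
  rw [abs_mul]
  exact mul_le_mul (hC x) (hD x) (abs_nonneg _) ((abs_nonneg _).trans (hC x))

lemma Continuous.exists_abs_comp_le {φ : ℝ → ℝ} (hφ : Continuous φ)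
    (hf : ∃ C, ∀ x, |f x| ≤ C) : ∃ M, ∀ x, |φ (f x)| ≤ M := by
  obtain ⟨C, hC⟩ := hf
  obtain ⟨M, hM⟩ := isCompact_Icc.exists_bound_of_continuousOn (hφ.continuousOn (s := Icc (-C) C))
  exact ⟨M, fun x => hM _ (abs_le.mp (hC x))⟩

end Bounded

section BalancingWeight

/-- The modified propensity `a(x)`, evaluated at `p = e(x)`, `v₀ = V₀(x)`, `v₁ = V₁(x)`. -/
noncomputable def balancingWeight (p v₀ v₁ : ℝ) : ℝ := p * v₁ / (p * v₁ + (1 - p) * v₀)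

variable {p v₀ v₁ : ℝ}

lemma balancingWeight_denom_pos (hp : p ∈ Icc (0 : ℝ) 1) (hv₀ : 0 < v₀) (hv₁ : 0 < v₁) :
    0 < p * v₁ + (1 - p) * v₀ := by
  obtain ⟨hp0, hp1⟩ := hp
  rcases hp0.eq_or_lt with rfl | hp0
  · simpa using hv₀
  · exact add_pos_of_pos_of_nonneg (mul_pos hp0 hv₁) (mul_nonneg (sub_nonneg.2 hp1) hv₀.le)

lemma balancingWeight_mem_Icc (hp : p ∈ Icc (0 : ℝ) 1) (hv₀ : 0 < v₀) (hv₁ : 0 < v₁) :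
    balancingWeight p v₀ v₁ ∈ Icc (0 : ℝ) 1 := by
  have hD := balancingWeight_denom_pos hp hv₀ hv₁
  have hpv₁ : 0 ≤ p * v₁ := mul_nonneg hp.1 hv₁.le
  have hqv₀ : 0 ≤ (1 - p) * v₀ := mul_nonneg (sub_nonneg.2 hp.2) hv₀.le
  exact ⟨div_nonneg hpv₁ hD.le, (div_le_one hD).2 (by linarith)⟩

lemma mul_one_sub_balancingWeight (hD : p * v₁ + (1 - p) * v₀ ≠ 0) :
    p * v₁ * (1 - balancingWeight p v₀ v₁) = (1 - p) * v₀ * balancingWeight p v₀ v₁ := by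
  unfold balancingWeight
  field_simp
  ring

end BalancingWeight

lemma apply_ite_mul_sub_mul_eq {w : ℝ} (hw : w = 0 ∨ w = 1) (φ : ℝ → ℝ) (t₀ t₁ a c : ℝ) :
    φ (if w = 1 then t₁ else t₀) * (w - a) * c
      = w * (φ t₁ * (1 - a) * c) - (1 - w) * (φ t₀ * a * c) := by
  rcases hw with rfl | rfl
  · rw [if_neg zero_ne_one]
    ring
  · rw [if_pos rfl]
    ring

section Propensity

variable {Ω E : Type*} [MeasurableSpace Ω] [MeasurableSpace E] {P : Measure Ω}
  [IsFiniteMeasure P] {X : Ω → E} {W : Ω → ℝ} {h : E → ℝ}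

lemma integrable_comp_of_abs_le (hX : Measurable X) (hm : Measurable h)
    (hb : ∃ C, ∀ x, |h x| ≤ C) : Integrable (fun ω => h (X ω)) P := by
  obtain ⟨C, hC⟩ := hb
  exact Integrable.of_bound (hm.comp hX).aestronglyMeasurable C (ae_of_all _ fun ω => hC (X ω))

lemma integrable_mul_comp_of_abs_le (hX : Measurable X) (hW : Measurable W)
    (hW01 : ∀ ω, W ω = 0 ∨ W ω = 1) (hm : Measurable h) (hb : ∃ C, ∀ x, |h x| ≤ C) :
    Integrable (fun ω => W ω * h (X ω)) P :=
  (integrable_comp_of_abs_le hX hm hb).bdd_mul (c := 1) hW.aestronglyMeasurable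
    (ae_of_all _ fun ω => by rcases hW01 ω with hω | hω <;> simp [hω])

theorem integral_mul_sub_one_sub_mul_eq_zero (hX : Measurable X) (hW : Measurable W)
    (hW01 : ∀ ω, W ω = 0 ∨ W ω = 1) {e h₀ h₁ : E → ℝ}
    (hprop : ∀ f : E → ℝ, Measurable f → (∃ C, ∀ x, |f x| ≤ C) →
      ∫ ω, W ω * f (X ω) ∂P = ∫ ω, e (X ω) * f (X ω) ∂P)
    (hm₀ : Measurable h₀) (hb₀ : ∃ C, ∀ x, |h₀ x| ≤ C)
    (hm₁ : Measurable h₁) (hb₁ : ∃ C, ∀ x, |h₁ x| ≤ C)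
    (hbal : ∀ x, e x * h₁ x = (1 - e x) * h₀ x) :
    ∫ ω, (W ω * h₁ (X ω) - (1 - W ω) * h₀ (X ω)) ∂P = 0 := by
  set f : E → ℝ := fun x => h₁ x + h₀ x
  have hfm : Measurable f := hm₁.add hm₀
  have hfb : ∃ C, ∀ x, |f x| ≤ C := by
    obtain ⟨C₀, hC₀⟩ := hb₀
    obtain ⟨C₁, hC₁⟩ := hb₁
    exact ⟨C₁ + C₀, fun x => (abs_add_le _ _).trans (add_le_add (hC₁ x) (hC₀ x))⟩
  have hef : ∀ x, e x * f x = h₀ x := fun x => by linear_combination hbal x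
  calc ∫ ω, (W ω * h₁ (X ω) - (1 - W ω) * h₀ (X ω)) ∂P
      = ∫ ω, (W ω * f (X ω) - h₀ (X ω)) ∂P := by congr 1; ext ω; ring
    _ = ∫ ω, W ω * f (X ω) ∂P - ∫ ω, h₀ (X ω) ∂P :=
      integral_sub (integrable_mul_comp_of_abs_le hX hW hW01 hfm hfb)
        (integrable_comp_of_abs_le hX hm₀ hb₀)
    _ = 0 := by simp only [hprop f hfm hfb, hef, sub_self]

end Propensity

/-- **Claim A.3 core (paper).** In the exponential family with cumulant `ψ` (so that the
variance functions are `V_w(x) = ψ''(η_w(x))`), if `e(X)` is a version of `P(W = 1 | X)`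
and `a(x) = e(x)V₁(x)/(e(x)V₁(x) + (1−e(x))V₀(x))`, then for every bounded measurable `g`,
`E[ψ''(η_W)·(W − a(X))·g(X)] = 0`. -/
theorem dina_score_orthogonality
    {Ω E : Type*} [MeasurableSpace Ω] [MeasurableSpace E]
    (P : Measure Ω) [IsProbabilityMeasure P]
    (X : Ω → E) (hX : Measurable X)
    (W : Ω → ℝ) (hW : Measurable W) (hW01 : ∀ ω, W ω = 0 ∨ W ω = 1)
    (e η₀ η₁ : E → ℝ)
    (hem : Measurable e) (heb : ∀ x, e x ∈ Icc (0 : ℝ) 1)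
    (hη₀m : Measurable η₀) (hη₀b : ∃ C, ∀ x, |η₀ x| ≤ C)
    (hη₁m : Measurable η₁) (hη₁b : ∃ C, ∀ x, |η₁ x| ≤ C)
    (ψ : ℝ → ℝ) (hψ : ContDiff ℝ 2 ψ) (hψpos : ∀ t, 0 < deriv (deriv ψ) t)
    (hprop : ∀ f : E → ℝ, Measurable f → (∃ C, ∀ x, |f x| ≤ C) →
      ∫ ω, W ω * f (X ω) ∂P = ∫ ω, e (X ω) * f (X ω) ∂P) :
    ∀ g : E → ℝ, Measurable g → (∃ C, ∀ x, |g x| ≤ C) →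
      ∫ ω, deriv (deriv ψ) (if W ω = 1 then η₁ (X ω) else η₀ (X ω)) *
        (W ω - e (X ω) * deriv (deriv ψ) (η₁ (X ω)) /
          (e (X ω) * deriv (deriv ψ) (η₁ (X ω))
            + (1 - e (X ω)) * deriv (deriv ψ) (η₀ (X ω)))) *
        g (X ω) ∂P = 0 := by
  intro g hgm hgb
  have hcont : Continuous (deriv (deriv ψ)) := by
    have := hψ.continuous_iteratedDeriv 2 le_rfl
    rwa [iteratedDeriv_eq_iterate] at this
  set V₀ : E → ℝ := fun x => deriv (deriv ψ) (η₀ x)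
  set V₁ : E → ℝ := fun x => deriv (deriv ψ) (η₁ x)
  set a : E → ℝ := fun x => balancingWeight (e x) (V₀ x) (V₁ x)
  have ha : ∀ x, a x ∈ Icc (0 : ℝ) 1 := fun x => balancingWeight_mem_Icc (heb x) (hψpos _) (hψpos _)
  have hV₀m : Measurable V₀ := (measurable_deriv _).comp hη₀m
  have hV₁m : Measurable V₁ := (measurable_deriv _).comp hη₁m
  have ham : Measurable a := by unfold a balancingWeight; fun_prop
  have key := integral_mul_sub_one_sub_mul_eq_zero (P := P) hX hW hW01 hprop
    (h₀ := fun x => V₀ x * a x * g x) (h₁ := fun x => V₁ x * (1 - a x) * g x)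
    (by fun_prop)
    (exists_abs_mul_le (exists_abs_mul_le (hcont.exists_abs_comp_le hη₀b)
      (exists_abs_le_of_mem_Icc ha)) hgb)
    (by fun_prop)
    (exists_abs_mul_le (exists_abs_mul_le (hcont.exists_abs_comp_le hη₁b)
      (exists_abs_le_of_mem_Icc fun x => ⟨sub_nonneg.2 (ha x).2, by linarith [(ha x).1]⟩)) hgb)
    (fun x => by
      linear_combination g x * mul_one_sub_balancingWeight
        (balancingWeight_denom_pos (heb x) (hψpos (η₀ x)) (hψpos (η₁ x))).ne')
  rw [← key]
  congr 1
  ext ω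
  exact apply_ite_mul_sub_mul_eq (hW01 ω) _ _ _ _ _
end

section
/- Let Y and C be independent nonnegative real-valued random variables on a probability space (Ω, P). Let λ : [0,∞) → [0,∞) be measurable and locally integrable, define Λ(y) := ∫₀^y λ(t) dt, let η ∈ ℝ, and suppose P(Y > y) = exp(−Λ(y)·exp(η)) for every y ≥ 0 with Y real-valued (so Λ(y) → ∞ as y → ∞). Then E[Λ(min(Y, C))] = exp(−η) · P(C ≥ Y). (Second identity of the paper's Lemma A.4: the expected cumulative hazard at the censored survival time equals exp(−η) times the probability of not being censored.) -/
open MeasureTheory Set Filter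
open scoped NNReal

/-!
By the layer-cake formula and independence,
`E[Λ(min(Y, C))] = ∫₀^∞ λ(t) P(Y > t) P(C > t) dt`. On the other hand the chain rule for the
absolutely continuous function `Λ` shows that `Y` has density
`e^η λ(t) exp(-Λ(t) e^η) = e^η λ(t) P(Y > t)`, so conditioning on `C` and applying the layer-cake
formula once more gives `P(Y ≤ C) = e^η ∫₀^∞ λ(t) P(Y > t) P(C > t) dt`.
-/

theorem LipschitzOnWith.comp_absolutelyContinuousOnInterval {X Y : Type*} [PseudoMetricSpace X]
    [PseudoMetricSpace Y] {g : X → Y} {K : ℝ≥0} {s : Set X} {f : ℝ → X} {a b : ℝ}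
    (hg : LipschitzOnWith K g s) (hf : AbsolutelyContinuousOnInterval f a b)
    (hfs : MapsTo f (uIcc a b) s) : AbsolutelyContinuousOnInterval (g ∘ f) a b := by
  unfold AbsolutelyContinuousOnInterval at hf ⊢
  refine squeeze_zero' (.of_forall fun _ ↦ Finset.sum_nonneg fun _ _ ↦ dist_nonneg) ?_
    (by simpa using hf.const_mul (K : ℝ))
  rw [eventually_inf_principal]
  filter_upwards with E hE
  rw [Finset.mul_sum]
  gcongr with i hi
  exact hg.dist_le_mul _ (hfs (hE.1 i hi).1) _ (hfs (hE.1 i hi).2)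

theorem ContDiff.comp_absolutelyContinuousOnInterval {g f : ℝ → ℝ} {a b : ℝ}
    (hg : ContDiff ℝ 1 g) (hf : AbsolutelyContinuousOnInterval f a b) :
    AbsolutelyContinuousOnInterval (g ∘ f) a b := by
  obtain ⟨C, hC⟩ := hf.exists_bound
  obtain ⟨K, hK⟩ := hg.contDiffOn.exists_lipschitzOnWith one_ne_zero (convex_closedBall 0 C)
    (isCompact_closedBall 0 C)
  exact hK.comp_absolutelyContinuousOnInterval hf fun x hx ↦ mem_closedBall_zero_iff.2 (hC x hx)

theorem AbsolutelyContinuousOnInterval.integral_comp_mul_deriv {f g g' : ℝ → ℝ} {a b : ℝ}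
    (hf : AbsolutelyContinuousOnInterval f a b) (hg : ∀ x, HasDerivAt g (g' x) x)
    (hg' : Continuous g') :
    ∫ x in a..b, g' (f x) * deriv f x = g (f b) - g (f a) := by
  have hderiv : deriv g = g' := funext fun x ↦ (hg x).deriv
  have hgC1 : ContDiff ℝ 1 g :=
    contDiff_one_iff_deriv.2 ⟨fun x ↦ (hg x).differentiableAt, hderiv ▸ hg'⟩
  rw [← Function.comp_apply (f := g), ← Function.comp_apply (f := g) (x := a),
    ← (hgC1.comp_absolutelyContinuousOnInterval hf).integral_deriv_eq_sub]
  refine intervalIntegral.integral_congr_ae ?_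
  filter_upwards [hf.ae_differentiableAt] with x hx hxab
  exact ((hg (f x)).comp x (hx (uIoc_subset_uIcc hxab)).hasDerivAt).deriv.symm

theorem IntervalIntegrable.integral_comp_integral_mul {f g g' : ℝ → ℝ} {a b : ℝ}
    (hf : IntervalIntegrable f volume a b) (hg : ∀ x, HasDerivAt g (g' x) x)
    (hg' : Continuous g') :
    ∫ x in a..b, g' (∫ t in a..x, f t) * f x = g (∫ t in a..b, f t) - g 0 := by
  have hF := (hf.absolutelyContinuousOnInterval_intervalIntegral left_mem_uIcc
    ).integral_comp_mul_deriv hg hg'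
  rw [intervalIntegral.integral_same] at hF
  rw [← hF]
  refine intervalIntegral.integral_congr_ae ?_
  filter_upwards [hf.ae_hasDerivAt_integral] with x hx hxab
  rw [(hx (uIoc_subset_uIcc hxab) a left_mem_uIcc).deriv]

namespace ProbabilityTheory.IndepFun

theorem measure_preimage_prod_eq_lintegral {Ω α β : Type*}
    [MeasurableSpace Ω] [MeasurableSpace α] [MeasurableSpace β] {μ : Measure Ω}
    [IsFiniteMeasure μ] {X : Ω → α} {Y : Ω → β} (hXY : IndepFun X Y μ) (hX : Measurable X)
    (hY : Measurable Y) {s : Set (α × β)} (hs : MeasurableSet s) :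
    μ ((fun ω ↦ (X ω, Y ω)) ⁻¹' s) = ∫⁻ ω, μ {ω' | (X ω', Y ω) ∈ s} ∂μ := by
  rw [← Measure.map_apply (hX.prodMk hY) hs, hXY.map_prod_eq_prod_map_map hX.aemeasurable
    hY.aemeasurable, Measure.prod_apply_symm hs,
    lintegral_map (measurable_measure_prodMk_right hs) hY]
  refine lintegral_congr fun ω ↦ ?_
  rw [Measure.map_apply hX (measurable_prodMk_right hs)]
  rfl

variable {Ω : Type*} [MeasurableSpace Ω] {P : Measure Ω} {Y C : Ω → ℝ} {f : ℝ → ℝ}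

theorem lintegral_ofReal_integral_min (hind : IndepFun Y C P) (hY : Measurable Y)
    (hC : Measurable C) (hYnn : ∀ ω, 0 ≤ Y ω) (hCnn : ∀ ω, 0 ≤ C ω)
    (hf : ∀ t > 0, IntervalIntegrable f volume 0 t) (hfnn : ∀ t > 0, 0 ≤ f t) :
    ∫⁻ ω, ENNReal.ofReal (∫ t in 0..min (Y ω) (C ω), f t) ∂P
      = ∫⁻ t in Ioi 0, P {ω | t < Y ω} * P {ω | t < C ω} * ENNReal.ofReal (f t) := by
  rw [lintegral_comp_eq_lintegral_meas_lt_mul P (ae_of_all _ fun ω ↦ le_min (hYnn ω) (hCnn ω))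
    (hY.min hC).aemeasurable hf ((ae_restrict_iff' measurableSet_Ioi).2 (ae_of_all _ hfnn))]
  refine lintegral_congr fun t ↦ ?_
  have hinter : {ω | t < min (Y ω) (C ω)} = Y ⁻¹' Ioi t ∩ C ⁻¹' Ioi t := by
    ext ω; simp
  rw [hinter, hind.measure_inter_preimage_eq_mul _ _ measurableSet_Ioi measurableSet_Ioi]
  rfl

theorem measure_le_eq_lintegral_of_density [IsFiniteMeasure P] (hind : IndepFun Y C P)
    (hY : Measurable Y) (hC : Measurable C) (hCnn : ∀ ω, 0 ≤ C ω)
    (hf : ∀ t > 0, IntervalIntegrable f volume 0 t) (hfnn : ∀ t > 0, 0 ≤ f t)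
    (hYf : ∀ c ≥ 0, P {ω | Y ω ≤ c} = ENNReal.ofReal (∫ t in 0..c, f t)) :
    P {ω | Y ω ≤ C ω} = ∫⁻ t in Ioi 0, P {ω | t < C ω} * ENNReal.ofReal (f t) := by
  rw [← lintegral_comp_eq_lintegral_meas_lt_mul P (ae_of_all _ hCnn) hC.aemeasurable hf
    ((ae_restrict_iff' measurableSet_Ioi).2 (ae_of_all _ hfnn)),
    ← lintegral_congr fun ω ↦ hYf (C ω) (hCnn ω)]
  exact hind.measure_preimage_prod_eq_lintegral hY hC
    (measurableSet_le measurable_fst measurable_snd)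

end ProbabilityTheory.IndepFun

theorem measure_le_eq_ofReal_integral_of_survival {Ω : Type*} [MeasurableSpace Ω]
    {P : Measure Ω} [IsProbabilityMeasure P] {Y : Ω → ℝ} (hY : Measurable Y) {lam : ℝ → ℝ}
    (hloc : ∀ y, IntervalIntegrable lam volume 0 y) {k : ℝ}
    (hsurv : ∀ y ≥ 0, P {ω | Y ω > y} = ENNReal.ofReal (Real.exp (-((∫ t in 0..y, lam t) * k))))
    {c : ℝ} (hc : 0 ≤ c) :
    P {ω | Y ω ≤ c}
      = ENNReal.ofReal (∫ t in 0..c, k * Real.exp (-((∫ s in 0..t, lam s) * k)) * lam t) := by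
  have hg (u : ℝ) : HasDerivAt (fun v ↦ -Real.exp (-(v * k))) (k * Real.exp (-(u * k))) u :=
    (hasDerivAt_mul_const k).fun_neg.exp.fun_neg.congr_deriv (by ring)
  have hcompl : {ω | Y ω ≤ c} = {ω | Y ω > c}ᶜ := by
    ext ω; simp
  rw [(hloc c).integral_comp_integral_mul hg (by fun_prop), hcompl,
    prob_compl_eq_one_sub (measurableSet_lt measurable_const hY), hsurv c hc,
    ← ENNReal.ofReal_one, ← ENNReal.ofReal_sub _ (Real.exp_pos _).le]
  congr 1
  simp
  ring

theorem dina_lemmaA4_expected_cumulative_hazard_general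
    {Ω : Type*} [MeasurableSpace Ω] (P : Measure Ω) [IsProbabilityMeasure P]
    (Y C : Ω → ℝ) (hY : Measurable Y) (hC : Measurable C)
    (hYnn : ∀ ω, 0 ≤ Y ω) (hCnn : ∀ ω, 0 ≤ C ω)
    (hind : ProbabilityTheory.IndepFun Y C P)
    (lam : ℝ → ℝ) (hlnn : ∀ t ≥ (0 : ℝ), 0 ≤ lam t)
    (hloc : ∀ y : ℝ, IntervalIntegrable lam MeasureTheory.volume 0 y)
    (Λ : ℝ → ℝ) (hΛ : ∀ y, Λ y = ∫ t in (0 : ℝ)..y, lam t)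
    (η : ℝ)
    (hsurv : ∀ y ≥ (0 : ℝ),
      P {ω | Y ω > y} = ENNReal.ofReal (Real.exp (-(Λ y * Real.exp η)))) :
    ∫ ω, Λ (min (Y ω) (C ω)) ∂P = Real.exp (-η) * (P {ω | C ω ≥ Y ω}).toReal := by
  obtain rfl : Λ = fun y ↦ ∫ t in (0 : ℝ)..y, lam t := funext hΛ
  set k := Real.exp η
  have hΛcont : Continuous fun y ↦ ∫ t in (0 : ℝ)..y, lam t :=
    intervalIntegral.continuous_primitive (fun a b ↦ (hloc a).symm.trans (hloc b)) 0
  have hcum := hind.lintegral_ofReal_integral_min hY hC hYnn hCnn (fun t _ ↦ hloc t)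
    fun t ht ↦ hlnn t ht.le
  have hdens := hind.measure_le_eq_lintegral_of_density hY hC hCnn
    (fun t _ ↦ (hloc t).continuousOn_mul (by fun_prop))
    (fun t ht ↦ mul_nonneg (by positivity) (hlnn t ht.le))
    fun c hc ↦ measure_le_eq_ofReal_integral_of_survival hY hloc hsurv hc
  have hrel : P {ω | C ω ≥ Y ω}
      = ENNReal.ofReal k * ∫⁻ ω, ENNReal.ofReal (∫ t in 0..min (Y ω) (C ω), lam t) ∂P := by
    rw [hdens, hcum, ← lintegral_const_mul' _ _ ENNReal.ofReal_ne_top]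
    refine setLIntegral_congr_fun measurableSet_Ioi fun t ht ↦ ?_
    rw [show P {ω | t < Y ω} = _ from hsurv t (le_of_lt ht), ENNReal.ofReal_mul (by positivity),
      ENNReal.ofReal_mul (by positivity)]
    ring
  have hnn : 0 ≤ᵐ[P] fun ω ↦ ∫ t in (0 : ℝ)..min (Y ω) (C ω), lam t :=
    ae_of_all _ fun ω ↦ intervalIntegral.integral_nonneg (le_min (hYnn ω) (hCnn ω))
      fun t ht ↦ hlnn t ht.1
  rw [integral_eq_lintegral_of_nonneg_ae hnn
      (hΛcont.measurable.comp (hY.min hC)).aestronglyMeasurable,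
    hrel, ENNReal.toReal_mul, ENNReal.toReal_ofReal (Real.exp_pos η).le, ← mul_assoc,
    ← Real.exp_add, neg_add_cancel, Real.exp_zero, one_mul]

/-- **Lemma A.4, second identity (paper).** With `Y ⟂ C`, `Λ(y) = ∫₀^y λ(t) dt`, and
`Y` having survival function `exp(−Λ(y)·exp(η))` (so `Λ(y) → ∞`), the expected cumulative
hazard at the censored survival time satisfies `E[Λ(min(Y,C))] = exp(−η)·P(C ≥ Y)`. -/
theorem dina_lemmaA4_expected_cumulative_hazard
    {Ω : Type*} [MeasurableSpace Ω] (P : Measure Ω) [IsProbabilityMeasure P]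
    (Y C : Ω → ℝ) (hY : Measurable Y) (hC : Measurable C)
    (hYnn : ∀ ω, 0 ≤ Y ω) (hCnn : ∀ ω, 0 ≤ C ω)
    (hind : ProbabilityTheory.IndepFun Y C P)
    (lam : ℝ → ℝ) (hlm : Measurable lam) (hlnn : ∀ t ≥ (0 : ℝ), 0 ≤ lam t)
    (hloc : ∀ y : ℝ, IntervalIntegrable lam MeasureTheory.volume 0 y)
    (Λ : ℝ → ℝ) (hΛ : ∀ y, Λ y = ∫ t in (0 : ℝ)..y, lam t)
    (η : ℝ)
    (hsurv : ∀ y ≥ (0 : ℝ),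
      P {ω | Y ω > y} = ENNReal.ofReal (Real.exp (-(Λ y * Real.exp η))))
    (hΛtop : Filter.Tendsto Λ Filter.atTop Filter.atTop) :
    ∫ ω, Λ (min (Y ω) (C ω)) ∂P = Real.exp (-η) * (P {ω | C ω ≥ Y ω}).toReal :=
  dina_lemmaA4_expected_cumulative_hazard_general P Y C hY hC hYnn hCnn hind lam hlnn hloc Λ hΛ η
    hsurv
end

section
/- Let X be a random vector in ℝ^d and Z a random element (on a common probability space) such that the second-moment matrix E[X Xᵀ] exists and is positive definite, and let η₀(X, Z) be a real-valued integrable random variable (with X·η₀(X,Z) integrable componentwise). Let μ(t) = c·t + d be an affine (linear canonical link) function with c ≠ 0, and let β, β*, α* ∈ ℝ^d satisfy the population moment equations E[X·μ(η₀(X,Z))] = E[X·μ(⟨X, α*⟩)] and E[X·μ(η₀(X,Z) + ⟨X, β⟩)] = E[X·μ(⟨X, α* + β*⟩)]. Then β* = β. (This is the 'if' direction of the paper's Claim A.1: under a linear canonical link, separate generalized-linear-regression estimation of the treatment effect is consistent even when η₀ is misspecified.) -/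
open MeasureTheory

open Matrix

/-!
With a linear link the moment equations are affine in the unknowns: both sides of the
treatment equation exceed the corresponding sides of the control equation by `c • M *ᵥ β` and
`c • M *ᵥ β*` respectively, where `M = E[X Xᵀ]`, so whatever `η₀` is, it cancels. Hence
`M *ᵥ β* = M *ᵥ β`, and a positive definite `M` is invertible.
-/

lemma mul_sum_mul_eq_sum {Ω ι : Type*} [Fintype ι] (X : Ω → ι → ℝ) (a : ι → ℝ) (i : ι) (ω : Ω) :
    X ω i * ∑ j, X ω j * a j = ∑ j, X ω i * X ω j * a j := by
  simp only [Finset.mul_sum, mul_assoc]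

section SecondMoment

variable {Ω ι : Type*} [MeasurableSpace Ω] [Fintype ι] {μ : Measure Ω} {X : Ω → ι → ℝ}

noncomputable def secondMoment (μ : Measure Ω) (X : Ω → ι → ℝ) : Matrix ι ι ℝ :=
  of fun i j => ∫ ω, X ω i * X ω j ∂μ

lemma integrable_mul_sum_mul (hXX : ∀ i j, Integrable (fun ω => X ω i * X ω j) μ)
    (a : ι → ℝ) (i : ι) : Integrable (fun ω => X ω i * ∑ j, X ω j * a j) μ := by
  simp only [mul_sum_mul_eq_sum]
  exact integrable_finsetSum _ fun j _ => (hXX i j).mul_const (a j)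

lemma integral_mul_sum_mul (hXX : ∀ i j, Integrable (fun ω => X ω i * X ω j) μ)
    (a : ι → ℝ) (i : ι) :
    ∫ ω, X ω i * ∑ j, X ω j * a j ∂μ = (secondMoment μ X *ᵥ a) i := by
  simp only [mul_sum_mul_eq_sum, mulVec, dotProduct, secondMoment, of_apply]
  rw [integral_finsetSum _ fun j _ => (hXX i j).mul_const (a j)]
  simp only [integral_mul_const]

lemma integral_add_const_mul_mul_sum {f : Ω → ℝ} (hf : Integrable f μ)
    (hXX : ∀ i j, Integrable (fun ω => X ω i * X ω j) μ) (c : ℝ) (a : ι → ℝ) (i : ι) :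
    ∫ ω, f ω + c * (X ω i * ∑ j, X ω j * a j) ∂μ
      = ∫ ω, f ω ∂μ + c * (secondMoment μ X *ᵥ a) i := by
  rw [integral_add hf ((integrable_mul_sum_mul hXX a i).const_mul c), integral_const_mul,
    integral_mul_sum_mul hXX]

end SecondMoment

theorem dina_claimA1_linear_link_consistency_general
    {Ω : Type*} [MeasurableSpace Ω] (P : Measure Ω)
    {d : ℕ} (X : Ω → Fin d → ℝ) (H : Ω → ℝ)
    (hXH : ∀ i, Integrable (fun ω => X ω i * H ω) P)
    (hXX : ∀ i j, Integrable (fun ω => X ω i * X ω j) P)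
    (hXi : ∀ i, Integrable (fun ω => X ω i) P)
    (hpd : (Matrix.of fun i j => ∫ ω, X ω i * X ω j ∂P).PosDef)
    (c dd : ℝ) (hc : c ≠ 0)
    (β βs αs : Fin d → ℝ)
    (h1 : ∀ i, ∫ ω, X ω i * (c * H ω + dd) ∂P
        = ∫ ω, X ω i * (c * (∑ j, X ω j * αs j) + dd) ∂P)
    (h2 : ∀ i, ∫ ω, X ω i * (c * (H ω + ∑ j, X ω j * β j) + dd) ∂P
        = ∫ ω, X ω i * (c * (∑ j, X ω j * (αs j + βs j)) + dd) ∂P) :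
    βs = β := by
  have hmoment : secondMoment P X *ᵥ βs = secondMoment P X *ᵥ β := by
    funext i
    have hbase : Integrable (fun ω => X ω i * (c * H ω + dd)) P :=
      (((hXH i).const_mul c).add ((hXi i).const_mul dd)).congr
        (.of_forall fun ω => by simp only [Pi.add_apply]; ring)
    have hlin : ∀ a : Fin d → ℝ, ∫ ω, X ω i * (c * (∑ j, X ω j * a j) + dd) ∂P
        = ∫ ω, dd * X ω i ∂P + c * (secondMoment P X *ᵥ a) i := fun a => by
      rw [← integral_add_const_mul_mul_sum ((hXi i).const_mul dd) hXX]
      congr 1 with ω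
      ring
    have hshift : ∫ ω, X ω i * (c * (H ω + ∑ j, X ω j * β j) + dd) ∂P
        = ∫ ω, X ω i * (c * H ω + dd) ∂P + c * (secondMoment P X *ᵥ β) i := by
      rw [← integral_add_const_mul_mul_sum hbase hXX]
      congr 1 with ω
      ring
    have hcontrol := (h1 i).trans (hlin αs)
    have htreated := (hshift.symm.trans (h2 i)).trans (hlin (αs + βs))
    rw [mulVec_add, Pi.add_apply] at htreated
    exact mul_left_cancel₀ hc (by linarith)
  exact mulVec_injective_of_isUnit hpd.isUnit hmoment

/-- **Claim A.1, 'if' direction (paper).** Under a linear canonical link `μ(t) = c·t + d`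
(`c ≠ 0`), if `E[X Xᵀ]` is positive definite and `(α*, α* + β*)` solve the
separate-estimation population moment equations with true control natural parameter
`η₀(X,Z)` (here `H`) and true effect `β`, then `β* = β`. -/
theorem dina_claimA1_linear_link_consistency
    {Ω : Type*} [MeasurableSpace Ω] (P : Measure Ω) [IsProbabilityMeasure P]
    {d : ℕ} (X : Ω → Fin d → ℝ) (H : Ω → ℝ)
    (hXm : Measurable X) (hHm : Measurable H)
    (hH : Integrable H P)
    (hXH : ∀ i, Integrable (fun ω => X ω i * H ω) P)
    (hXX : ∀ i j, Integrable (fun ω => X ω i * X ω j) P)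
    (hXi : ∀ i, Integrable (fun ω => X ω i) P)
    (hpd : (Matrix.of fun i j => ∫ ω, X ω i * X ω j ∂P).PosDef)
    (c dd : ℝ) (hc : c ≠ 0)
    (β βs αs : Fin d → ℝ)
    (h1 : ∀ i, ∫ ω, X ω i * (c * H ω + dd) ∂P
        = ∫ ω, X ω i * (c * (∑ j, X ω j * αs j) + dd) ∂P)
    (h2 : ∀ i, ∫ ω, X ω i * (c * (H ω + ∑ j, X ω j * β j) + dd) ∂P
        = ∫ ω, X ω i * (c * (∑ j, X ω j * (αs j + βs j)) + dd) ∂P) :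
    βs = β :=
  dina_claimA1_linear_link_consistency_general P X H hXH hXX hXi hpd c dd hc β βs αs h1 h2
end
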